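/- In Λ_{1,7} with k = -3e_0 + e_1 + ... + e_7, the Geiser involution x ↦ -x + (x·k)k maps the set of exceptional elements (those e with e·e = -1 and e·k = -1) to itself, and has no fixed exceptional element; thus the 56 exceptional elements are partitioned into 28 pairs. -/

import Mathlib

/-- The inner product of Λ_{1,7}. -/
def lambdaForm (x y : Fin 8 → ℤ) : ℤ := 2 * x 0 * y 0 - ∑ i, x i * y i

/-- k = -3e_0 + e_1 + ... + e_7 -/
def kvec : Fin 8 → ℤ := fun i => if i = 0 then -3 else 1

/-- The Geiser involution x ↦ -x + (x·k)k. -/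
def geiser (x : Fin 8 → ℤ) : Fin 8 → ℤ := -x + lambdaForm x kvec • kvec

/-- Exceptional elements of Λ_{1,7}. -/
def IsExceptional (e : Fin 8 → ℤ) : Prop :=
  lambdaForm e e = -1 ∧ lambdaForm e kvec = -1

/-
The Geiser map is minus the reflection in the root-like vector `k` (note `k·k = 2`), so it is an
involutive isometry of `Λ_{1,7}` fixing `k·x`; hence it preserves exceptional classes. For an
exceptional `e` it sends `e₀` to `3 - e₀`, so it has no fixed points since `3` is odd. Cauchy–Schwarz
on `∑ eᵢ = 1 - 3e₀`, `∑ eᵢ² = e₀² + 1` forces `0 ≤ e₀ ≤ 3`, so each Geiser pair has exactly one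
member with `e₀ ≤ 1`; those members have all `|eᵢ| ≤ 1` and are counted by enumeration (28 of them).
-/

open Finset

lemma lambdaForm_comm (x y : Fin 8 → ℤ) : lambdaForm x y = lambdaForm y x := by
  simp only [lambdaForm, mul_comm (x _)]
  ring

lemma lambdaForm_eq_sum_succ (x y : Fin 8 → ℤ) :
    lambdaForm x y = x 0 * y 0 - ∑ i : Fin 7, x i.succ * y i.succ := by
  rw [lambdaForm, Fin.sum_univ_succ]
  ring

lemma lambdaForm_kvec_kvec : lambdaForm kvec kvec = 2 := by decide

lemma lambdaForm_geiser_left (x y : Fin 8 → ℤ) :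
    lambdaForm (geiser x) y = -lambdaForm x y + lambdaForm x kvec * lambdaForm kvec y := by
  simp only [lambdaForm, geiser, Pi.add_apply, Pi.neg_apply, Pi.smul_apply, smul_eq_mul,
    add_mul, neg_mul, sum_add_distrib, sum_neg_distrib, mul_assoc, ← mul_sum]
  ring

lemma lambdaForm_geiser_kvec (x : Fin 8 → ℤ) : lambdaForm (geiser x) kvec = lambdaForm x kvec := by
  rw [lambdaForm_geiser_left, lambdaForm_kvec_kvec]
  ring

lemma lambdaForm_geiser_geiser (x y : Fin 8 → ℤ) :
    lambdaForm (geiser x) (geiser y) = lambdaForm x y := by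
  rw [lambdaForm_geiser_left, lambdaForm_comm kvec, lambdaForm_geiser_kvec, lambdaForm_comm x,
    lambdaForm_geiser_left, lambdaForm_comm y, lambdaForm_comm kvec x]
  ring

lemma geiser_involutive : Function.Involutive geiser := fun x => by
  change -geiser x + lambdaForm (geiser x) kvec • kvec = x
  rw [lambdaForm_geiser_kvec, geiser]
  abel

lemma geiser_apply_zero (x : Fin 8 → ℤ) : geiser x 0 = -x 0 - 3 * lambdaForm x kvec := by
  simp [geiser, kvec]
  ring

lemma geiser_ne_self_of_odd {x : Fin 8 → ℤ} (hx : Odd (lambdaForm x kvec)) : geiser x ≠ x :=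
  fun h => by
    have := congrFun h 0
    rw [geiser_apply_zero] at this
    obtain ⟨m, hm⟩ := hx
    omega

lemma isExceptional_geiser {e : Fin 8 → ℤ} (he : IsExceptional e) : IsExceptional (geiser e) :=
  ⟨(lambdaForm_geiser_geiser e e).trans he.1, (lambdaForm_geiser_kvec e).trans he.2⟩

namespace IsExceptional

variable {e : Fin 8 → ℤ}

lemma sum_sq_succ (he : IsExceptional e) : ∑ i : Fin 7, e i.succ ^ 2 = e 0 ^ 2 + 1 := by
  have := he.1
  simp only [lambdaForm_eq_sum_succ, ← sq] at this
  linarith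

lemma sum_succ (he : IsExceptional e) : ∑ i : Fin 7, e i.succ = 1 - 3 * e 0 := by
  have := he.2
  simp only [lambdaForm_eq_sum_succ, kvec, Fin.succ_ne_zero, if_false, if_true, mul_one] at this
  linarith

lemma zero_mem_Icc (he : IsExceptional e) : e 0 ∈ Icc 0 3 := by
  have h := sq_sum_le_card_mul_sum_sq (s := univ) (f := fun i : Fin 7 => e i.succ)
  rw [he.sum_succ, he.sum_sq_succ, card_univ, Fintype.card_fin] at h
  push_cast at h
  rw [mem_Icc]
  constructor <;> nlinarith

lemma abs_succ_le_one (he : IsExceptional e) (h0 : e 0 ≤ 1) (i : Fin 7) : |e i.succ| ≤ 1 := by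
  have hi : e i.succ ^ 2 ≤ 2 := by
    have := single_le_sum (fun j _ => sq_nonneg (e (Fin.succ j))) (mem_univ i)
    have := (mem_Icc.1 he.zero_mem_Icc).1
    nlinarith [he.sum_sq_succ]
  have : |e i.succ| < 2 := abs_lt_of_sq_lt_sq (by linarith) (by norm_num)
  omega

end IsExceptional

instance : DecidablePred IsExceptional := fun _ => inferInstanceAs (Decidable (_ ∧ _))

noncomputable def lowExceptional : Finset (Fin 8 → ℤ) :=
  (Fintype.piFinset fun i => if i = 0 then Icc 0 1 else Icc (-1) 1).filter IsExceptional

lemma mem_lowExceptional {e : Fin 8 → ℤ} : e ∈ lowExceptional ↔ IsExceptional e ∧ e 0 ≤ 1 := by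
  refine ⟨fun h => ?_, fun ⟨he, h0⟩ => ?_⟩
  · obtain ⟨hbox, he⟩ := mem_filter.1 h
    exact ⟨he, (mem_Icc.1 (by simpa using Fintype.mem_piFinset.1 hbox 0)).2⟩
  · refine mem_filter.2 ⟨Fintype.mem_piFinset.2 fun i => ?_, he⟩
    cases i using Fin.cases with
    | zero => exact mem_Icc.2 ⟨(mem_Icc.1 he.zero_mem_Icc).1, h0⟩
    | succ i => simpa [Fin.succ_ne_zero, ← abs_le] using he.abs_succ_le_one h0 i

set_option maxRecDepth 100000 in
lemma card_lowExceptional : #lowExceptional = 28 := by decide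

lemma IsExceptional.mem_lowExceptional_or {e : Fin 8 → ℤ} (he : IsExceptional e) :
    e ∈ lowExceptional ∨ geiser e ∈ lowExceptional := by
  simp only [mem_lowExceptional, geiser_apply_zero, he.2, he, isExceptional_geiser he, true_and]
  omega

lemma geiser_notMem_lowExceptional {e : Fin 8 → ℤ} (he : e ∈ lowExceptional) :
    geiser e ∉ lowExceptional := by
  rw [mem_lowExceptional] at he ⊢
  rw [geiser_apply_zero, he.1.2]
  have := (mem_Icc.1 he.1.zero_mem_Icc).1
  omega

lemma setOf_isExceptional :
    {e | IsExceptional e} = ↑lowExceptional ∪ geiser '' ↑lowExceptional := by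
  ext e
  refine ⟨fun he => ?_, ?_⟩
  · rcases IsExceptional.mem_lowExceptional_or he with h | h
    · exact Or.inl h
    · exact Or.inr ⟨geiser e, h, geiser_involutive e⟩
  · rintro (h | ⟨e, h, rfl⟩)
    · exact (mem_lowExceptional.1 h).1
    · exact isExceptional_geiser (mem_lowExceptional.1 h).1

lemma disjoint_lowExceptional_image_geiser :
    Disjoint (↑lowExceptional : Set (Fin 8 → ℤ)) (geiser '' ↑lowExceptional) := by
  rw [Set.disjoint_right]
  rintro _ ⟨e, he, rfl⟩
  exact geiser_notMem_lowExceptional he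

lemma setOf_pairs :
    {s : Set (Fin 8 → ℤ) | ∃ e, IsExceptional e ∧ s = {e, geiser e}} =
      (fun e => {e, geiser e}) '' ↑lowExceptional := by
  ext s
  refine ⟨?_, fun ⟨e, he, hs⟩ => ⟨e, (mem_lowExceptional.1 he).1, hs.symm⟩⟩
  rintro ⟨e, he, rfl⟩
  rcases IsExceptional.mem_lowExceptional_or he with h | h
  · exact ⟨e, h, rfl⟩
  · exact ⟨geiser e, h, by simp only [geiser_involutive e, Set.pair_comm]⟩

lemma injOn_pair_lowExceptional :
    Set.InjOn (fun e => ({e, geiser e} : Set (Fin 8 → ℤ))) ↑lowExceptional := by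
  intro e he e' he' (h : ({e, geiser e} : Set _) = {e', geiser e'})
  have : e ∈ ({e', geiser e'} : Set _) := h ▸ Set.mem_insert e _
  rcases this with rfl | rfl
  · rfl
  · exact absurd he (geiser_notMem_lowExceptional he')

/-- the Geiser involution maps the set of exceptional elements to
itself with no fixed point, so the 56 exceptional elements fall into 28 pairs. -/
theorem geiser_pairs_exceptional :
    (∀ e : Fin 8 → ℤ, IsExceptional e → IsExceptional (geiser e)) ∧
    (∀ e : Fin 8 → ℤ, IsExceptional e → geiser e ≠ e) ∧
    {e : Fin 8 → ℤ | IsExceptional e}.ncard = 56 ∧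
    {s : Set (Fin 8 → ℤ) | ∃ e, IsExceptional e ∧ s = {e, geiser e}}.ncard = 28 := by
  refine ⟨fun _ => isExceptional_geiser,
    fun e he => geiser_ne_self_of_odd (by rw [he.2]; decide), ?_, ?_⟩
  · rw [setOf_isExceptional, Set.ncard_union_eq disjoint_lowExceptional_image_geiser,
      geiser_involutive.injective.injOn.ncard_image, Set.ncard_coe_finset, card_lowExceptional]
  · rw [setOf_pairs, injOn_pair_lowExceptional.ncard_image, Set.ncard_coe_finset,
      card_lowExceptional]
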